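/- For every integer n ≥ 0, the number of basis partitions of n with even signature minus the number of basis partitions of n with odd signature equals 1 if n is a perfect square, and equals 0 otherwise. -/

import Mathlib

open Finset
open scoped Classical

namespace BasisPartitions

/-! ### Ordinary partitions -/

/-- The parts of a partition, listed in weakly decreasing order. -/
def sparts {n : ℕ} (π : n.Partition) : List ℕ := π.parts.sort (· ≥ ·)

/-- `conj L j` is the number of parts that are `≥ j`, i.e. the `j`-th part of the
conjugate partition (for `j ≥ 1`). -/
def conj (L : List ℕ) (j : ℕ) : ℕ := L.countP (fun b => j ≤ b)

/-- The Durfee square size: the largest `k` such that the `k`-th part is `≥ k`. -/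
def durfee (L : List ℕ) : ℕ := (List.range L.length).countP (fun i => i + 1 ≤ L.getD i 0)

/-- The `(i+1)`-st successive rank `r_{i+1} = b_{i+1} - c_{i+1}` (0-indexed `i`). -/
def rank (L : List ℕ) (i : ℕ) : ℤ := (L.getD i 0 : ℤ) - (conj L (i + 1) : ℤ)

/-- The successive rank vector `(r_1, ..., r_k)` where `k` is the Durfee square size. -/
def ranks (L : List ℕ) : List ℤ := (List.range (durfee L)).map (rank L)

/-- A basis partition: the partitioned number is minimal among all partitions having
the same successive rank vector. -/
def IsBasis {n : ℕ} (π : n.Partition) : Prop :=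
  ∀ (m : ℕ) (π' : m.Partition), ranks (sparts π') = ranks (sparts π) → n ≤ m

/-- The signature: the number of distinct part sizes below the Durfee square. -/
def sig (L : List ℕ) : ℕ := ((L.drop (durfee L)).dedup).length

/-- `b(n;k)`: the number of basis partitions of `n` with Durfee square size `k`. -/
noncomputable def bCount (n k : ℕ) : ℕ :=
  Nat.card {π : n.Partition // IsBasis π ∧ durfee (sparts π) = k}

/-- `b(n,k,s)`: the number of basis partitions of `n` with Durfee square size `k`
and signature `s`. -/
noncomputable def bCount3 (n k s : ℕ) : ℕ :=
  Nat.card {π : n.Partition // IsBasis π ∧ durfee (sparts π) = k ∧ sig (sparts π) = s}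

/-- `B(n;j)`: the number of basis partitions of `n` with signature `j`. -/
noncomputable def BCount (n j : ℕ) : ℕ :=
  Nat.card {π : n.Partition // IsBasis π ∧ sig (sparts π) = j}

/-- Rogers–Ramanujan condition: exactly `k` parts, consecutive gaps `≥ 2`, last part `≥ 1`. -/
def RR (L : List ℕ) (k : ℕ) : Prop :=
  L.length = k ∧ (∀ i, i + 1 < k → L.getD (i + 1) 0 + 2 ≤ L.getD i 0) ∧ 1 ≤ L.getD (k - 1) 0

/-- `t(π)` for a Rogers–Ramanujan partition: the number of gaps `> 2`, plus 1 if the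
last part is `> 1`. -/
def tRR (L : List ℕ) (k : ℕ) : ℕ :=
  ((Finset.range (k - 1)).filter (fun i => L.getD (i + 1) 0 + 2 < L.getD i 0)).card +
    (if 1 < L.getD (k - 1) 0 then 1 else 0)

/-- Primary condition: exactly `k` parts, each part `≥ k`. -/
def Primary (L : List ℕ) (k : ℕ) : Prop := L.length = k ∧ ∀ x ∈ L, k ≤ x

/-- `t(π)` for a primary partition: the number of strict descents, plus 1 if the
last part is `> k`. -/
def tP (L : List ℕ) (k : ℕ) : ℕ :=
  ((Finset.range (k - 1)).filter (fun i => L.getD (i + 1) 0 < L.getD i 0)).card +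
    (if k < L.getD (k - 1) 0 then 1 else 0)

/-- A complete basis partition: every `j` with `1 ≤ j ≤ k-1` occurs as a part of `π_b`
(a row below the Durfee square) or as a part of `π_r` (a column length strictly to the
right of the Durfee square). -/
def IsComplete {n : ℕ} (π : n.Partition) : Prop :=
  ∀ j : ℕ, 1 ≤ j → j < durfee (sparts π) →
    j ∈ (sparts π).drop (durfee (sparts π)) ∨
      ∃ c : ℕ, durfee (sparts π) < c ∧ conj (sparts π) c = j

/-- `b_c(n)`: the number of complete basis partitions of `n`. -/
noncomputable def bc (n : ℕ) : ℕ := Nat.card {π : n.Partition // IsBasis π ∧ IsComplete π}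

/-! ### Partitions with non-repeating odd parts and their 2-modular graphs -/

/-- Partitions with non-repeating (distinct) odd parts. -/
def Pod {n : ℕ} (π : n.Partition) : Prop := ∀ x, Odd x → π.parts.count x ≤ 1

/-- The size (sum of entries) of the `c`-th column (1-indexed) of the 2-modular graph. -/
def mcolSize (L : List ℕ) (c : ℕ) : ℕ :=
  (L.map (fun x => if 2 * c ≤ x then 2 else if x = 2 * c - 1 then 1 else 0)).sum

/-- The length (number of entries) of the `c`-th column (1-indexed) of the 2-modular graph. -/
def mcolLen (L : List ℕ) (c : ℕ) : ℕ := L.countP (fun x => 2 * c - 1 ≤ x)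

/-- The number of entries in a row of the 2-modular graph recording the part `x`,
namely `⌈x/2⌉`. -/
def mrowLen (x : ℕ) : ℕ := (x + 1) / 2

/-- The 2-modular Durfee square size: the largest `k` with `⌈b_k/2⌉ ≥ k`. -/
def mdurfee (L : List ℕ) : ℕ := (List.range L.length).countP (fun i => 2 * i + 1 ≤ L.getD i 0)

/-- The `(i+1)`-st 2-modular successive rank: (size of row `i+1`) − (size of column `i+1`). -/
def mrank (L : List ℕ) (i : ℕ) : ℤ := (L.getD i 0 : ℤ) - (mcolSize L (i + 1) : ℤ)

/-- The 2-modular successive rank vector. -/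
def mranks (L : List ℕ) : List ℤ := (List.range (mdurfee L)).map (mrank L)

/-- A minimal basis partition in `P_{o,d}`: the partitioned number is minimal among all
partitions with non-repeating odd parts having the same 2-modular successive rank vector. -/
def MinBasis {n : ℕ} (μ : n.Partition) : Prop :=
  Pod μ ∧ ∀ (m : ℕ) (μ' : m.Partition), Pod μ' →
    mranks (sparts μ') = mranks (sparts μ) → n ≤ m

/-- A basis partition in `P_{o,d}`: no row of the 2-modular graph strictly below the Durfee
square has size equal to the size of a column strictly to the right of the Durfee square. -/
def PodBasis {n : ℕ} (π : n.Partition) : Prop :=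
  Pod π ∧ ∀ i, mdurfee (sparts π) ≤ i → i < (sparts π).length →
    ∀ c, mdurfee (sparts π) < c → mcolSize (sparts π) c ≠ (sparts π).getD i 0

/-- The signature of a basis partition in `P_{o,d}`: the number of distinct sizes among the
rows of the 2-modular graph strictly below the Durfee square. -/
def msig (L : List ℕ) : ℕ := ((L.drop (mdurfee L)).dedup).length

/-- The ℓ-signature: the number of distinct lengths among the rows of the 2-modular
graph strictly below the Durfee square. -/
def lsig (L : List ℕ) : ℕ := (((L.drop (mdurfee L)).map mrowLen).dedup).length

/-- `b(n;j)` for `P_{o,d}`: the number of basis partitions of `n` in `P_{o,d}` with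
signature `j`. -/
noncomputable def podB (n j : ℕ) : ℕ := Nat.card {π : n.Partition // PodBasis π ∧ msig (sparts π) = j}

/-- The number of odd parts. -/
def numOdd (L : List ℕ) : ℕ := L.countP (fun x => x % 2 = 1)

/-- A special partition: distinct parts with consecutive differences `≥ 4`, where a
difference equal to `4` is permitted only when both parts are even. -/
def Special (L : List ℕ) : Prop :=
  ∀ i, i + 1 < L.length →
    L.getD (i + 1) 0 + 4 ≤ L.getD i 0 ∧
      (L.getD i 0 = L.getD (i + 1) 0 + 4 → Even (L.getD i 0) ∧ Even (L.getD (i + 1) 0))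

/-- The `i`-th part of a special partition, with the convention that the part just after
the last one is `-2`. -/
def hpart (L : List ℕ) (i : ℕ) : ℤ := if i < L.length then (L.getD i 0 : ℤ) else -2

/-- `ℓ(π)`: the number of gaps `> 4` in a special partition, with the convention
`h_{k+1} = -2`. -/
def ell (L : List ℕ) : ℕ :=
  ((Finset.range L.length).filter (fun i => 4 < hpart L i - hpart L (i + 1))).card

/-!
A partition with Durfee square of side `k` is determined by `k`, the gaps
`g i = b (i+1) - max k (b (i+2))` to the right of the square and the multiplicities `e i` of the
parts `i + 1` below it, and every such data occurs. Its size is `k² + ∑ (i+1) (g i + e i)`, while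
its successive ranks only see the differences `c i = g i - e i = r (i+1) - r (i+2)`. So the size
is at least `k² + ∑ (i+1) |c i|`, with equality iff `g i = 0 ∨ e i = 0` for all `i`: these are
the basis partitions, and they correspond to the integer lists `c` with
`k² + ∑ (i+1) |c i| = n`, the signature becoming the number of negative entries of `c`.
Negating the first nonzero entry of `c` is a sign-reversing involution on these lists whose only
possible fixed point is the zero list of length `k`, present exactly when `n = k²`.
-/

lemma eq_of_pairwise_of_count_eq {α : Type*} [PartialOrder α] [DecidableEq α] {M N : List α}
    (hM : M.Pairwise (· ≥ ·)) (hN : N.Pairwise (· ≥ ·)) (h : ∀ v, M.count v = N.count v) :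
    M = N :=
  List.Perm.eq_of_pairwise' hM hN (List.perm_iff_count.mpr h)

lemma lt_countP_range_iff {p : ℕ → Bool} (hp : ∀ i j, i ≤ j → p j → p i) {m i : ℕ}
    (hi : i < m) : i < (List.range m).countP p ↔ p i := by
  induction m generalizing i with
  | zero => omega
  | succ m ih =>
    have hle : (List.range m).countP p ≤ m := List.countP_le_length.trans (by simp)
    rw [List.range_succ, List.countP_append, List.countP_singleton]
    by_cases hm : p m
    · have hall : (List.range m).countP p = m := by
        rw [List.countP_eq_length.mpr fun a ha => hp a m (List.mem_range.mp ha).le hm,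
          List.length_range]
      simp only [hm, if_true, hall]
      exact ⟨fun _ => hp i m (by omega) hm, fun _ => hi⟩
    · rcases Nat.lt_succ_iff_lt_or_eq.mp hi with hi | rfl
      · simpa [hm] using ih hi
      · simp only [hm, Bool.false_eq_true, if_false, add_zero, iff_false]
        omega

lemma map_range_eq_map_range_iff {α : Type*} {f f' : ℕ → α} {m m' : ℕ} :
    (List.range m).map f = (List.range m').map f' ↔ m = m' ∧ ∀ i < m, f i = f' i := by
  constructor
  · intro h
    obtain rfl : m = m' := by simpa using congrArg List.length h
    exact ⟨rfl, fun i hi => List.map_inj_left.mp h i (List.mem_range.mpr hi)⟩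
  · rintro ⟨rfl, h⟩
    exact List.map_inj_left.mpr fun i hi => h i (List.mem_range.mp hi)

lemma forall_sum_Ico_eq_iff {M : Type*} [AddCancelCommMonoid M] {f f' : ℕ → M} {k : ℕ} :
    (∀ i < k, ∑ j ∈ Finset.Ico i k, f j = ∑ j ∈ Finset.Ico i k, f' j) ↔ ∀ i < k, f i = f' i := by
  refine ⟨fun h i hi => ?_,
    fun h i _ => Finset.sum_congr rfl fun j hj => h j (Finset.mem_Ico.mp hj).2⟩
  have htail : ∑ j ∈ Finset.Ico (i + 1) k, f j = ∑ j ∈ Finset.Ico (i + 1) k, f' j := by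
    rcases Nat.lt_or_ge (i + 1) k with h' | h'
    · exact h _ h'
    · simp [Finset.Ico_eq_empty_of_le h']
  have := h i hi
  rw [Finset.sum_eq_sum_Ico_succ_bot hi, Finset.sum_eq_sum_Ico_succ_bot hi, htail] at this
  exact add_right_cancel this

section Durfee

variable {L : List ℕ} {i j k : ℕ}

lemma getD_le_getD_of_le (hL : L.Pairwise (· ≥ ·)) (hij : i ≤ j) : L.getD j 0 ≤ L.getD i 0 := by
  rcases hij.lt_or_eq with hij | rfl
  · by_cases hj : j < L.length
    · rw [List.getD_eq_getElem _ _ hj, List.getD_eq_getElem _ _ (hij.trans hj)]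
      exact List.pairwise_iff_getElem.mp hL _ _ _ _ hij
    · rw [List.getD_eq_default _ _ (not_lt.mp hj)]
      exact Nat.zero_le _
  · rfl

lemma lt_durfee_iff (hL : L.Pairwise (· ≥ ·)) (hi : i < L.length) :
    i < durfee L ↔ i + 1 ≤ L.getD i 0 := by
  refine (lt_countP_range_iff (fun i j hij hj => ?_) hi).trans (by simp)
  simp only [decide_eq_true_eq] at hj ⊢
  have := getD_le_getD_of_le hL hij
  omega

lemma durfee_le_length (L : List ℕ) : durfee L ≤ L.length :=
  List.countP_le_length.trans (by simp)

lemma durfee_le_getD (hL : L.Pairwise (· ≥ ·)) (hi : i < durfee L) : durfee L ≤ L.getD i 0 := by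
  have hlast := (lt_durfee_iff hL (i := durfee L - 1) (by have := durfee_le_length L; omega)).mp
    (by omega)
  have := getD_le_getD_of_le hL (show i ≤ durfee L - 1 by omega)
  omega

lemma getD_le_durfee (hL : L.Pairwise (· ≥ ·)) (hi : durfee L ≤ i) : L.getD i 0 ≤ durfee L := by
  refine (getD_le_getD_of_le hL hi).trans ?_
  by_cases hk : durfee L < L.length
  · have := (lt_durfee_iff hL hk).not.mp (lt_irrefl _)
    omega
  · rw [List.getD_eq_default _ _ (not_lt.mp hk)]
    exact Nat.zero_le _

lemma durfee_eq_of_getD (hL : L.Pairwise (· ≥ ·)) (hk : k ≤ L.length)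
    (htop : ∀ i < k, k ≤ L.getD i 0) (hbot : L.getD k 0 ≤ k) : durfee L = k := by
  apply le_antisymm
  · by_contra! h
    by_cases hkL : k < L.length
    · have := (lt_durfee_iff hL hkL).mp h
      omega
    · have := durfee_le_length L
      omega
  · rcases Nat.eq_zero_or_pos k with rfl | hpos
    · exact Nat.zero_le _
    · have := (lt_durfee_iff hL (i := k - 1) (by omega)).mpr (by have := htop (k - 1); omega)
      omega

lemma le_durfee_of_mem_drop (hL : L.Pairwise (· ≥ ·)) {x : ℕ} (hx : x ∈ L.drop (durfee L)) :
    x ≤ durfee L := by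
  obtain ⟨i, hi, rfl⟩ := List.mem_iff_getElem.mp hx
  rw [List.getElem_drop, ← List.getD_eq_getElem _ 0]
  exact getD_le_durfee hL (by omega)

end Durfee

section OfGaps

def lowerParts (e : ℕ → ℕ) : ℕ → List ℕ
  | 0 => []
  | k + 1 => List.replicate (e k) (k + 1) ++ lowerParts e k

variable {g e : ℕ → ℕ} {i k : ℕ}

lemma mem_lowerParts {x : ℕ} (hx : x ∈ lowerParts e k) : 0 < x ∧ x ≤ k := by
  induction k with
  | zero => simp [lowerParts] at hx
  | succ k ih =>
    rcases List.mem_append.mp hx with h | h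
    · have := List.eq_of_mem_replicate h
      omega
    · have := ih h
      omega

lemma pairwise_lowerParts (e : ℕ → ℕ) (k : ℕ) : (lowerParts e k).Pairwise (· ≥ ·) := by
  induction k with
  | zero => simp [lowerParts]
  | succ k ih =>
    refine List.pairwise_append.mpr ⟨List.pairwise_replicate.mpr (Or.inr le_rfl), ih, ?_⟩
    intro a ha b hb
    have := List.eq_of_mem_replicate ha
    have := (mem_lowerParts hb).2
    omega

lemma count_lowerParts (hi : i < k) : (lowerParts e k).count (i + 1) = e i := by
  induction k with
  | zero => omega
  | succ k ih =>
    rw [lowerParts, List.count_append, List.count_replicate]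
    rcases Nat.lt_succ_iff_lt_or_eq.mp hi with hi | rfl
    · rw [ih hi]
      simp only [Nat.reduceBeqDiff, beq_iff_eq, Nat.add_eq_right, ite_eq_right_iff]
      omega
    · rw [List.count_eq_zero.mpr fun h => by have := (mem_lowerParts h).2; omega]
      simp

lemma sum_lowerParts (e : ℕ → ℕ) (k : ℕ) :
    (lowerParts e k).sum = ∑ j ∈ Finset.range k, (j + 1) * e j := by
  induction k with
  | zero => simp [lowerParts]
  | succ k ih =>
    rw [lowerParts, List.sum_append, List.sum_replicate, ih, Finset.sum_range_succ, smul_eq_mul]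
    ring

lemma countP_lowerParts (e : ℕ → ℕ) (i k : ℕ) :
    (lowerParts e k).countP (fun x => i + 1 ≤ x) = ∑ j ∈ Finset.Ico i k, e j := by
  induction k with
  | zero => simp [lowerParts]
  | succ k ih =>
    rw [lowerParts, List.countP_append, List.countP_replicate, ih]
    by_cases hik : i ≤ k
    · rw [Finset.sum_Ico_succ_top hik]
      simp only [add_le_add_iff_right, hik, decide_true, ↓reduceIte]
      omega
    · rw [Finset.Ico_eq_empty_of_le (by omega), Finset.Ico_eq_empty_of_le (by omega)]
      simp only [add_le_add_iff_right, decide_eq_true_eq, Finset.sum_empty, add_zero,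
        ite_eq_right_iff]
      omega

lemma lowerParts_congr {e' : ℕ → ℕ} (h : ∀ i < k, e i = e' i) :
    lowerParts e k = lowerParts e' k := by
  induction k with
  | zero => rfl
  | succ k ih => rw [lowerParts, lowerParts, h k (by omega), ih fun i hi => h i (by omega)]

/-- The partition with Durfee square of side `k`, right gaps `g` and lower multiplicities `e`. -/
def ofGaps (k : ℕ) (g e : ℕ → ℕ) : List ℕ :=
  (List.range k).map (fun i => k + ∑ j ∈ Finset.Ico i k, g j) ++ lowerParts e k

lemma getD_ofGaps (hi : i < k) : (ofGaps k g e).getD i 0 = k + ∑ j ∈ Finset.Ico i k, g j := by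
  rw [ofGaps, List.getD_append _ _ _ _ (by simpa using hi),
    List.getD_eq_getElem _ _ (by simpa using hi)]
  simp

lemma getD_ofGaps_self_le : (ofGaps k g e).getD k 0 ≤ k := by
  rw [ofGaps, List.getD_append_right _ _ _ _ (by simp), List.length_map, List.length_range,
    Nat.sub_self]
  cases h : lowerParts e k with
  | nil => simp
  | cons a t => exact (mem_lowerParts (h ▸ List.mem_cons_self : a ∈ lowerParts e k)).2

lemma pairwise_ofGaps (k : ℕ) (g e : ℕ → ℕ) : (ofGaps k g e).Pairwise (· ≥ ·) := by
  refine List.pairwise_append.mpr ⟨?_, pairwise_lowerParts e k, ?_⟩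
  · refine List.pairwise_map.mpr ((List.pairwise_lt_range (n := k)).imp fun hab => ?_)
    have := Finset.sum_le_sum_of_subset (f := g)
      (Finset.Ico_subset_Ico_left hab.le : Finset.Ico _ k ⊆ _)
    omega
  · intro a ha b hb
    obtain ⟨i, -, rfl⟩ := List.mem_map.mp ha
    have := (mem_lowerParts hb).2
    omega

lemma pos_of_mem_ofGaps {x : ℕ} (hx : x ∈ ofGaps k g e) : 0 < x := by
  rcases List.mem_append.mp hx with h | h
  · obtain ⟨i, hi, rfl⟩ := List.mem_map.mp h
    have := List.mem_range.mp hi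
    omega
  · exact (mem_lowerParts h).1

lemma durfee_ofGaps (k : ℕ) (g e : ℕ → ℕ) : durfee (ofGaps k g e) = k :=
  durfee_eq_of_getD (pairwise_ofGaps k g e) (by simp [ofGaps])
    (fun i hi => by rw [getD_ofGaps hi]; omega) getD_ofGaps_self_le

lemma ofGaps_congr {g' e' : ℕ → ℕ} (hg : ∀ i < k, g i = g' i) (he : ∀ i < k, e i = e' i) :
    ofGaps k g e = ofGaps k g' e' := by
  rw [ofGaps, ofGaps, lowerParts_congr he]
  congr 1
  refine List.map_congr_left fun i _ => ?_
  rw [Finset.sum_congr rfl fun j hj => hg j (Finset.mem_Ico.mp hj).2]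

lemma sum_ofGaps (k : ℕ) (g e : ℕ → ℕ) :
    (ofGaps k g e).sum = k * k + ∑ i ∈ Finset.range k, (i + 1) * (g i + e i) := by
  have htop : ((List.range k).map fun i => k + ∑ j ∈ Finset.Ico i k, g j).sum
      = ∑ i ∈ Finset.range k, (k + ∑ j ∈ Finset.Ico i k, g j) := by
    rw [Finset.sum_eq_multiset_sum]
    rfl
  rw [ofGaps, List.sum_append, htop, sum_lowerParts, Finset.sum_add_distrib, Finset.sum_const,
    Finset.card_range, smul_eq_mul, Finset.range_eq_Ico, Finset.sum_Ico_Ico_comm]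
  simp only [Nat.Ico_zero_eq_range, Finset.sum_const, Finset.card_range, smul_eq_mul, mul_comm,
    Nat.mul_add, mul_one, Finset.sum_add_distrib]
  ring

end OfGaps

section Gaps

def rightGap (L : List ℕ) (i : ℕ) : ℕ := L.getD i 0 - max (durfee L) (L.getD (i + 1) 0)

def lowerCount (L : List ℕ) (i : ℕ) : ℕ := (L.drop (durfee L)).count (i + 1)

variable {L : List ℕ} {g e : ℕ → ℕ} {i k : ℕ}

lemma getD_eq_durfee_add_sum (hL : L.Pairwise (· ≥ ·)) (hi : i < durfee L) :
    L.getD i 0 = durfee L + ∑ j ∈ Finset.Ico i (durfee L), rightGap L j := by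
  obtain ⟨d, hd⟩ := Nat.exists_eq_add_of_lt hi
  have hmax : max (durfee L) (L.getD (i + 1) 0)
      = durfee L + ∑ j ∈ Finset.Ico (i + 1) (durfee L), rightGap L j := by
    induction d generalizing i with
    | zero =>
      rw [Finset.Ico_eq_empty_of_le (by omega), Finset.sum_empty, add_zero,
        max_eq_left (getD_le_durfee hL (by omega))]
    | succ d ih =>
      have hi' : i + 1 < durfee L := by omega
      rw [max_eq_right (durfee_le_getD hL hi'), Finset.sum_eq_sum_Ico_succ_bot hi', rightGap]
      have := ih hi' (by omega)
      have := max_le (durfee_le_getD hL hi') (getD_le_getD_of_le hL (Nat.le_add_right (i + 1) 1))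
      omega
  rw [Finset.sum_eq_sum_Ico_succ_bot hi, rightGap, hmax]
  have := max_le (durfee_le_getD hL hi) (getD_le_getD_of_le hL (Nat.le_add_right i 1))
  omega

lemma drop_durfee_eq_lowerParts (hL : L.Pairwise (· ≥ ·)) (hpos : ∀ x ∈ L, 0 < x) :
    L.drop (durfee L) = lowerParts (lowerCount L) (durfee L) := by
  refine eq_of_pairwise_of_count_eq (hL.sublist (List.drop_sublist _ _))
    (pairwise_lowerParts _ _) fun v => ?_
  rcases v with _ | w
  · rw [List.count_eq_zero.mpr fun h => (hpos 0 (List.mem_of_mem_drop h)).false,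
      List.count_eq_zero.mpr fun h => (mem_lowerParts h).1.false]
  · by_cases hw : w < durfee L
    · rw [count_lowerParts hw, lowerCount]
    · rw [List.count_eq_zero.mpr fun h => by have := le_durfee_of_mem_drop hL h; omega,
        List.count_eq_zero.mpr fun h => by have := (mem_lowerParts h).2; omega]

lemma eq_ofGaps (hL : L.Pairwise (· ≥ ·)) (hpos : ∀ x ∈ L, 0 < x) :
    L = ofGaps (durfee L) (rightGap L) (lowerCount L) := by
  conv_lhs => rw [← List.take_append_drop (durfee L) L]
  rw [ofGaps, ← drop_durfee_eq_lowerParts hL hpos]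
  congr 1
  refine List.ext_getElem (by simp [durfee_le_length]) fun i h1 h2 => ?_
  have hi : i < durfee L := by simpa using h2
  rw [List.getElem_take, List.getElem_map, List.getElem_range, ← getD_eq_durfee_add_sum hL hi,
    List.getD_eq_getElem]

lemma rightGap_ofGaps (hi : i < k) : rightGap (ofGaps k g e) i = g i := by
  have hmax : max k ((ofGaps k g e).getD (i + 1) 0) = k + ∑ j ∈ Finset.Ico (i + 1) k, g j := by
    rcases Nat.lt_or_ge (i + 1) k with h | h
    · rw [getD_ofGaps h, max_eq_right (Nat.le_add_right _ _)]
    · obtain rfl : i + 1 = k := by omega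
      rw [max_eq_left getD_ofGaps_self_le, Finset.Ico_self, Finset.sum_empty, add_zero]
  rw [rightGap, durfee_ofGaps, getD_ofGaps hi, hmax, Finset.sum_eq_sum_Ico_succ_bot hi]
  omega

lemma lowerCount_ofGaps (hi : i < k) : lowerCount (ofGaps k g e) i = e i := by
  rw [lowerCount, durfee_ofGaps, ofGaps, List.drop_left' (by simp), count_lowerParts hi]

end Gaps

section Ranks

variable {L M : List ℕ} {g e : ℕ → ℕ} {i k : ℕ}

lemma conj_ofGaps (hi : i < k) : conj (ofGaps k g e) (i + 1) = k + ∑ j ∈ Finset.Ico i k, e j := by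
  rw [conj, ofGaps, List.countP_append, List.countP_map, countP_lowerParts,
    List.countP_eq_length.mpr fun j hj => by
      simp only [List.mem_range, Function.comp_apply, decide_eq_true_eq] at hj ⊢
      omega, List.length_range]

lemma rank_ofGaps (hi : i < k) :
    rank (ofGaps k g e) i = ∑ j ∈ Finset.Ico i k, ((g j : ℤ) - e j) := by
  rw [rank, getD_ofGaps hi, conj_ofGaps hi, Finset.sum_sub_distrib]
  push_cast
  ring

/-- The difference `r_{i+1} - r_{i+2}` of consecutive successive ranks, with `r_{k+1} = 0`
(see `rank_eq_sum_rankDiff`). -/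
def rankDiff (L : List ℕ) (i : ℕ) : ℤ := rightGap L i - lowerCount L i

def rankDiffs (L : List ℕ) : List ℤ := (List.range (durfee L)).map (rankDiff L)

lemma length_rankDiffs (L : List ℕ) : (rankDiffs L).length = durfee L := by simp [rankDiffs]

lemma getD_rankDiffs (hi : i < durfee L) : (rankDiffs L).getD i 0 = rankDiff L i := by
  rw [rankDiffs, List.getD_eq_getElem _ _ (by simpa), List.getElem_map, List.getElem_range]

lemma rank_eq_sum_rankDiff (hL : L.Pairwise (· ≥ ·)) (hpos : ∀ x ∈ L, 0 < x)
    (hi : i < durfee L) : rank L i = ∑ j ∈ Finset.Ico i (durfee L), rankDiff L j := by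
  conv_lhs => rw [eq_ofGaps hL hpos]
  exact rank_ofGaps hi

lemma ranks_eq_ranks_iff (hL : L.Pairwise (· ≥ ·)) (hLpos : ∀ x ∈ L, 0 < x)
    (hM : M.Pairwise (· ≥ ·)) (hMpos : ∀ x ∈ M, 0 < x) :
    ranks L = ranks M ↔ rankDiffs L = rankDiffs M := by
  rw [ranks, ranks, rankDiffs, rankDiffs, map_range_eq_map_range_iff, map_range_eq_map_range_iff]
  refine and_congr_right fun hk => ?_
  refine (forall₂_congr fun i hi => ?_).trans forall_sum_Ico_eq_iff
  rw [rank_eq_sum_rankDiff hL hLpos hi, rank_eq_sum_rankDiff hM hMpos (hk ▸ hi), hk]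

end Ranks

section Weight

/-- The size of the reduced partition with rank differences `c` (see `sum_ofRankDiffs`). -/
def weight (c : List ℤ) : ℕ :=
  c.length * c.length + ∑ i ∈ Finset.range c.length, (i + 1) * (c.getD i 0).natAbs

def negCount (c : List ℤ) : ℕ := c.countP (· < 0)

/-- A right gap and lower parts at the same level could both be shrunk without changing the
successive ranks. -/
def IsReduced (L : List ℕ) : Prop := ∀ i < durfee L, rightGap L i = 0 ∨ lowerCount L i = 0

def ofRankDiffs (c : List ℤ) : List ℕ :=
  ofGaps c.length (fun i => (c.getD i 0).toNat) (fun i => (-c.getD i 0).toNat)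

variable {L : List ℕ}

lemma sum_eq_durfee_mul_add (hL : L.Pairwise (· ≥ ·)) (hpos : ∀ x ∈ L, 0 < x) :
    L.sum = durfee L * durfee L +
      ∑ i ∈ Finset.range (durfee L), (i + 1) * (rightGap L i + lowerCount L i) := by
  conv_lhs => rw [eq_ofGaps hL hpos]
  exact sum_ofGaps _ _ _

lemma weight_rankDiffs (L : List ℕ) : weight (rankDiffs L) =
    durfee L * durfee L + ∑ i ∈ Finset.range (durfee L), (i + 1) * (rankDiff L i).natAbs := by
  rw [weight, length_rankDiffs]
  congr 1
  exact Finset.sum_congr rfl fun i hi => by rw [getD_rankDiffs (Finset.mem_range.mp hi)]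

lemma rankDiff_natAbs_le (L : List ℕ) (i : ℕ) :
    (i + 1) * (rankDiff L i).natAbs ≤ (i + 1) * (rightGap L i + lowerCount L i) :=
  Nat.mul_le_mul_left _ (by rw [rankDiff]; omega)

lemma weight_rankDiffs_le_sum (hL : L.Pairwise (· ≥ ·)) (hpos : ∀ x ∈ L, 0 < x) :
    weight (rankDiffs L) ≤ L.sum := by
  rw [weight_rankDiffs, sum_eq_durfee_mul_add hL hpos]
  exact Nat.add_le_add_left (Finset.sum_le_sum fun i _ => rankDiff_natAbs_le L i) _

lemma weight_rankDiffs_eq_sum_iff (hL : L.Pairwise (· ≥ ·)) (hpos : ∀ x ∈ L, 0 < x) :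
    weight (rankDiffs L) = L.sum ↔ IsReduced L := by
  rw [weight_rankDiffs, sum_eq_durfee_mul_add hL hpos, Nat.add_left_cancel_iff,
    Finset.sum_eq_sum_iff_of_le fun i _ => rankDiff_natAbs_le L i]
  simp only [Finset.mem_range, IsReduced]
  refine forall₂_congr fun i _ => ?_
  rw [Nat.mul_left_cancel_iff i.succ_pos, rankDiff]
  omega

lemma pairwise_ofRankDiffs (c : List ℤ) : (ofRankDiffs c).Pairwise (· ≥ ·) := pairwise_ofGaps _ _ _

lemma pos_of_mem_ofRankDiffs {c : List ℤ} {x : ℕ} (hx : x ∈ ofRankDiffs c) : 0 < x :=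
  pos_of_mem_ofGaps hx

lemma rankDiffs_ofRankDiffs (c : List ℤ) : rankDiffs (ofRankDiffs c) = c := by
  refine List.ext_getElem (by rw [length_rankDiffs, ofRankDiffs, durfee_ofGaps]) fun i h hi => ?_
  rw [length_rankDiffs] at h
  rw [← List.getD_eq_getElem _ 0, getD_rankDiffs h, rankDiff, ofRankDiffs, rightGap_ofGaps hi,
    lowerCount_ofGaps hi, Int.toNat_sub_toNat_neg, List.getD_eq_getElem]

lemma isReduced_ofRankDiffs (c : List ℤ) : IsReduced (ofRankDiffs c) := by
  intro i hi
  rw [ofRankDiffs, durfee_ofGaps] at hi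
  rw [ofRankDiffs, rightGap_ofGaps hi, lowerCount_ofGaps hi]
  omega

lemma sum_ofRankDiffs (c : List ℤ) : (ofRankDiffs c).sum = weight c := by
  simp only [ofRankDiffs, sum_ofGaps, Int.toNat_add_toNat_neg_eq_natAbs, weight]

lemma ofRankDiffs_rankDiffs (hL : L.Pairwise (· ≥ ·)) (hpos : ∀ x ∈ L, 0 < x)
    (hred : IsReduced L) : ofRankDiffs (rankDiffs L) = L := by
  conv_rhs => rw [eq_ofGaps hL hpos]
  rw [ofRankDiffs, length_rankDiffs]
  apply ofGaps_congr <;> intro i hi <;> rcases hred i hi with h | h <;>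
    rw [getD_rankDiffs hi, rankDiff, h] <;> simp

lemma sig_eq_negCount {L : List ℕ} (hL : L.Pairwise (· ≥ ·)) (hpos : ∀ x ∈ L, 0 < x)
    (hred : IsReduced L) : sig L = negCount (rankDiffs L) := by
  set D := L.drop (durfee L)
  have hperm : (((List.range (durfee L)).filter fun i => i + 1 ∈ D).map (· + 1)).Perm D.dedup := by
    refine (List.perm_ext_iff_of_nodup (((List.nodup_range).filter _).map (add_left_injective 1))
      (List.nodup_dedup D)).mpr fun v => ?_
    simp only [List.mem_map, List.mem_filter, List.mem_range, decide_eq_true_eq, List.mem_dedup]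
    constructor
    · rintro ⟨i, ⟨-, hi⟩, rfl⟩
      exact hi
    · intro hv
      have := le_durfee_of_mem_drop hL hv
      have := hpos v (List.mem_of_mem_drop hv)
      exact ⟨v - 1, ⟨by omega, by rwa [Nat.sub_add_cancel this]⟩, by omega⟩
  rw [sig, ← hperm.length_eq, List.length_map, ← List.countP_eq_length_filter, negCount, rankDiffs,
    List.countP_map]
  refine List.countP_congr fun i hi => ?_
  have hi := List.mem_range.mp hi
  simp only [Function.comp_apply, decide_eq_true_eq]
  rw [← List.count_pos_iff, show D.count (i + 1) = lowerCount L i from rfl, rankDiff]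
  rcases hred i hi with h | h <;> rw [h] <;> omega

end Weight

section Partitions

variable {n : ℕ}

lemma pairwise_sparts (π : n.Partition) : (sparts π).Pairwise (· ≥ ·) :=
  Multiset.pairwise_sort _ _

lemma pos_of_mem_sparts (π : n.Partition) : ∀ x ∈ sparts π, 0 < x :=
  fun _ hx => π.parts_pos (by rwa [sparts, Multiset.mem_sort] at hx)

lemma coe_sparts (π : n.Partition) : (sparts π : Multiset ℕ) = π.parts := Multiset.sort_eq _ _

lemma sum_sparts (π : n.Partition) : (sparts π).sum = n := by
  rw [← Multiset.sum_coe, coe_sparts, π.parts_sum]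

lemma sparts_injective : Function.Injective (sparts (n := n)) :=
  fun π π' h => Nat.Partition.ext (by rw [← coe_sparts, h, coe_sparts])

def toPartition (M : List ℕ) (hpos : ∀ x ∈ M, 0 < x) (hsum : M.sum = n) : n.Partition :=
  ⟨M, fun hx => hpos _ (Multiset.mem_coe.mp hx), by rw [Multiset.sum_coe, hsum]⟩

lemma sparts_toPartition {M : List ℕ} (hM : M.Pairwise (· ≥ ·)) (hpos : ∀ x ∈ M, 0 < x)
    (hsum : M.sum = n) : sparts (toPartition M hpos hsum) = M :=
  List.Perm.eq_of_pairwise' (pairwise_sparts _) hM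
    (Multiset.coe_eq_coe.mp (coe_sparts (toPartition M hpos hsum)))

lemma isBasis_iff_isReduced (π : n.Partition) : IsBasis π ↔ IsReduced (sparts π) := by
  have hL := pairwise_sparts π
  have hpos := pos_of_mem_sparts π
  constructor
  · intro hb
    by_contra hred
    have hlt : weight (rankDiffs (sparts π)) < (sparts π).sum :=
      (weight_rankDiffs_le_sum hL hpos).lt_of_ne (mt (weight_rankDiffs_eq_sum_iff hL hpos).mp hred)
    -- the reduced partition with the same rank differences is strictly smaller
    have := hb _ (toPartition _ (fun _ => pos_of_mem_ofRankDiffs) (sum_ofRankDiffs _))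
      (by rw [sparts_toPartition (pairwise_ofRankDiffs _), ranks_eq_ranks_iff
        (pairwise_ofRankDiffs _) (fun _ => pos_of_mem_ofRankDiffs) hL hpos,
        rankDiffs_ofRankDiffs])
    have := sum_sparts π
    omega
  · intro hred m π' hr
    rw [ranks_eq_ranks_iff (pairwise_sparts π') (pos_of_mem_sparts π') hL hpos] at hr
    calc n = weight (rankDiffs (sparts π)) :=
          by rw [(weight_rankDiffs_eq_sum_iff hL hpos).mpr hred, sum_sparts]
      _ = weight (rankDiffs (sparts π')) := by rw [hr]
      _ ≤ (sparts π').sum := weight_rankDiffs_le_sum (pairwise_sparts π') (pos_of_mem_sparts π')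
      _ = m := sum_sparts π'

end Partitions

def basisEquiv (n : ℕ) (P : ℕ → Prop) :
    {π : n.Partition // IsBasis π ∧ P (sig (sparts π))} ≃
      {c : List ℤ // weight c = n ∧ P (negCount c)} where
  toFun π :=
    have hred := (isBasis_iff_isReduced π.1).mp π.2.1
    ⟨rankDiffs (sparts π.1),
      by rw [(weight_rankDiffs_eq_sum_iff (pairwise_sparts _) (pos_of_mem_sparts _)).mpr hred,
        sum_sparts],
      by rw [← sig_eq_negCount (pairwise_sparts _) (pos_of_mem_sparts _) hred]; exact π.2.2⟩
  invFun c :=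
    ⟨toPartition (ofRankDiffs c.1) (fun _ => pos_of_mem_ofRankDiffs)
        ((sum_ofRankDiffs _).trans c.2.1),
      by
        rw [isBasis_iff_isReduced, sparts_toPartition (pairwise_ofRankDiffs _)]
        exact isReduced_ofRankDiffs _,
      by
        rw [sparts_toPartition (pairwise_ofRankDiffs _), sig_eq_negCount (pairwise_ofRankDiffs _)
          (fun _ => pos_of_mem_ofRankDiffs) (isReduced_ofRankDiffs _), rankDiffs_ofRankDiffs]
        exact c.2.2⟩
  left_inv π := Subtype.ext <| sparts_injective <| by
    rw [sparts_toPartition (pairwise_ofRankDiffs _), ofRankDiffs_rankDiffs (pairwise_sparts _)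
      (pos_of_mem_sparts _) ((isBasis_iff_isReduced π.1).mp π.2.1)]
  right_inv c := Subtype.ext <| by
    simp only
    rw [sparts_toPartition (pairwise_ofRankDiffs _), rankDiffs_ofRankDiffs]

section FlipFirst

def flipFirst : List ℤ → List ℤ
  | [] => []
  | a :: t => if a = 0 then 0 :: flipFirst t else -a :: t

lemma flipFirst_flipFirst (c : List ℤ) : flipFirst (flipFirst c) = c := by
  induction c with
  | nil => rfl
  | cons a t ih => by_cases ha : a = 0 <;> simp [flipFirst, ha, ih]

lemma map_natAbs_flipFirst (c : List ℤ) : (flipFirst c).map Int.natAbs = c.map Int.natAbs := by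
  induction c with
  | nil => rfl
  | cons a t ih => by_cases ha : a = 0 <;> simp [flipFirst, ha, ih]

lemma weight_flipFirst (c : List ℤ) : weight (flipFirst c) = weight c := by
  have h := map_natAbs_flipFirst c
  have hlen : (flipFirst c).length = c.length := by simpa using congrArg List.length h
  have hget (i : ℕ) : ((flipFirst c).getD i 0).natAbs = (c.getD i 0).natAbs := by
    rw [← List.getD_map _ 0 Int.natAbs, ← List.getD_map _ 0 Int.natAbs, h]
  simp only [weight, hlen, hget]

lemma exists_ne_zero_flipFirst_iff (c : List ℤ) :
    (∃ x ∈ flipFirst c, x ≠ 0) ↔ ∃ x ∈ c, x ≠ 0 := by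
  simpa using congrArg (∃ y ∈ ·, y ≠ 0) (map_natAbs_flipFirst c)

lemma negCount_eq_zero {c : List ℤ} (h : ∀ x ∈ c, x = 0) : negCount c = 0 :=
  List.countP_eq_zero.mpr fun x hx => by simp [h x hx]

lemma even_negCount_flipFirst_iff {c : List ℤ} (hc : ∃ x ∈ c, x ≠ 0) :
    Even (negCount (flipFirst c)) ↔ ¬Even (negCount c) := by
  induction c with
  | nil => simp at hc
  | cons a t ih =>
    by_cases ha : a = 0
    · subst ha
      simpa [flipFirst, negCount] using ih (by simpa using hc)
    · rcases lt_or_gt_of_ne ha with h | h <;>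
        simp [flipFirst, ha, negCount, h, h.le, Nat.even_add_one]

lemma ncard_even_sub_ncard_odd {S : Set (List ℤ)} (hS : ∀ c ∈ S, flipFirst c ∈ S)
    (hfin : S.Finite) :
    ({c ∈ S | Even (negCount c)}.ncard : ℤ) - {c ∈ S | Odd (negCount c)}.ncard =
      {c ∈ S | ∀ x ∈ c, x = 0}.ncard := by
  set E := {c ∈ S | Even (negCount c)}
  set Z := {c ∈ S | ∀ x ∈ c, x = 0}
  have hZE : Z ⊆ E := fun c hc => ⟨hc.1, by rw [negCount_eq_zero hc.2]; exact ⟨0, rfl⟩⟩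
  have himage : flipFirst '' (E \ Z) = {c ∈ S | Odd (negCount c)} := by
    ext c
    constructor
    · rintro ⟨d, ⟨⟨hdS, hdE⟩, hdZ⟩, rfl⟩
      have hne : ∃ x ∈ d, x ≠ 0 := by simpa [Z, hdS] using hdZ
      exact ⟨hS d hdS, Nat.not_even_iff_odd.mp ((even_negCount_flipFirst_iff hne).not.mpr
        (not_not.mpr hdE))⟩
    · rintro ⟨hcS, hcO⟩
      have hne : ∃ x ∈ c, x ≠ 0 := by
        by_contra! h0
        rw [negCount_eq_zero h0] at hcO
        exact Nat.not_odd_zero hcO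
      refine ⟨flipFirst c, ⟨⟨hS c hcS, (even_negCount_flipFirst_iff hne).mpr
        (Nat.not_even_iff_odd.mpr hcO)⟩, fun h => ?_⟩, flipFirst_flipFirst c⟩
      obtain ⟨x, hx, hx0⟩ := (exists_ne_zero_flipFirst_iff c).mpr hne
      exact hx0 (h.2 x hx)
  have hEfin : E.Finite := hfin.subset fun c hc => hc.1
  rw [← himage, Set.ncard_image_of_injective _ (Function.LeftInverse.injective flipFirst_flipFirst),
    Set.ncard_sdiff hZE (hEfin.subset hZE), Nat.cast_sub (Set.ncard_le_ncard hZE hEfin)]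
  ring

end FlipFirst

lemma weight_replicate_zero (m : ℕ) : weight (List.replicate m 0) = m * m := by
  simp [weight]

lemma ncard_weight_forall_eq_zero (n : ℕ) :
    {c ∈ {c : List ℤ | weight c = n} | ∀ x ∈ c, x = 0}.ncard = if IsSquare n then 1 else 0 := by
  have key (c : List ℤ) :
      (weight c = n ∧ ∀ x ∈ c, x = 0) ↔ ∃ m, m * m = n ∧ c = List.replicate m 0 := by
    constructor
    · rintro ⟨hw, h0⟩
      have hc : c = List.replicate c.length 0 := List.eq_replicate_iff.mpr ⟨rfl, h0⟩
      have := weight_replicate_zero c.length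
      rw [← hc] at this
      exact ⟨c.length, by omega, hc⟩
    · rintro ⟨m, hm, rfl⟩
      exact ⟨by rw [weight_replicate_zero, hm], fun x hx => List.eq_of_mem_replicate hx⟩
  split_ifs with hn
  · obtain ⟨m, rfl⟩ := hn
    convert Set.ncard_singleton (List.replicate m (0 : ℤ))
    ext c
    change (weight c = m * m ∧ ∀ x ∈ c, x = 0) ↔ c = List.replicate m 0
    rw [key]
    constructor
    · rintro ⟨m', hm', rfl⟩
      rw [Nat.mul_self_inj.mp hm']
    · rintro rfl
      exact ⟨m, rfl, rfl⟩
  · convert Set.ncard_empty (List ℤ)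
    ext c
    change (weight c = n ∧ ∀ x ∈ c, x = 0) ↔ False
    rw [key, iff_false]
    rintro ⟨m, hm, -⟩
    exact hn ⟨m, hm.symm⟩

theorem statement5 (n : ℕ) :
    (Nat.card {π : n.Partition // IsBasis π ∧ Even (sig (sparts π))} : ℤ) -
      (Nat.card {π : n.Partition // IsBasis π ∧ Odd (sig (sparts π))} : ℤ) =
      if IsSquare n then 1 else 0 := by
  have hfin : {c : List ℤ | weight c = n}.Finite := Set.finite_coe_iff.mp <| Finite.of_equiv _
    ((basisEquiv n fun _ => True).trans (Equiv.subtypeEquivRight fun _ => and_iff_left trivial))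
  have := ncard_even_sub_ncard_odd (S := {c | weight c = n})
    (fun c (hc : weight c = n) => (weight_flipFirst c).trans hc) hfin
  rw [ncard_weight_forall_eq_zero] at this
  rw [Nat.card_congr (basisEquiv n Even), Nat.card_congr (basisEquiv n Odd)]
  exact_mod_cast this

end BasisPartitions
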